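/- arXiv:1903.03698 — 6 statements merged into one kernel-verified Lean document; each statement's English description precedes it below -/
import Mathlib

section
/- Let Q be a set of probability densities on S (with respect to μ) such that every p ∈ Q is positive μ-almost everywhere, the uniform density u belongs to Q, Q is sequentially compact as a subset of L¹(μ), the entropy functional H is finite on Q and sequentially continuous on Q with respect to L¹(μ)-convergence, and F : Q → Q is sequentially continuous with respect to L¹(μ)-convergence and satisfies H(F(p)) ≥ H(p) for every p ∈ Q, with equality if and only if p = u μ-almost everywhere. Then for every p₁ ∈ Q, the sequence defined recursively by p_{t+1} = F(p_t) converges to u in L¹(μ). -/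
/-!
The entropy `H` is a Lyapunov function for `F`: it is nondecreasing along the orbit
`p_{t+1} = F p_t`, so its continuity along a subsequence converging to a cluster point `g`
makes the whole sequence `H p_t` converge to `H g`. Continuity of `F` makes `F g` the limit of
the shifted subsequence, whence `H (F g) = H g` and `g = u` a.e. Thus `u` is the only cluster
point, and compactness forces convergence to it.
-/

open MeasureTheory Real Filter

/-- `L1Tendsto μ f g` means the sequence of functions `f n` converges to `g` in `L¹(μ)`. -/
def L1Tendsto {S : Type*} [MeasurableSpace S] (μ : Measure S)
    (f : ℕ → S → ℝ) (g : S → ℝ) : Prop :=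
  Tendsto (fun n => ∫ x, |f n x - g x| ∂μ) atTop (nhds 0)

open Topology

theorem orbit_mem {α : Type*} {Q : Set α} {F : α → α} {seq : ℕ → α}
    (hFQ : ∀ p ∈ Q, F p ∈ Q) (h0 : seq 0 ∈ Q) (hrec : ∀ t, seq (t + 1) = F (seq t)) :
    ∀ n, seq n ∈ Q
  | 0 => h0
  | n + 1 => hrec n ▸ hFQ _ (orbit_mem hFQ h0 hrec n)

theorem monotone_comp_orbit {α β : Type*} [Preorder β] {Q : Set α} {F : α → α} {H : α → β}
    {seq : ℕ → α} (hFincr : ∀ p ∈ Q, H p ≤ H (F p)) (hseqQ : ∀ n, seq n ∈ Q)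
    (hrec : ∀ t, seq (t + 1) = F (seq t)) : Monotone (H ∘ seq) :=
  monotone_nat_of_le_succ fun n => by
    simpa only [Function.comp, hrec] using hFincr _ (hseqQ n)

namespace L1Tendsto

variable {S : Type*} [MeasurableSpace S] {μ : Measure S}

theorem congr_ae_right {f : ℕ → S → ℝ} {g u : S → ℝ} (h : L1Tendsto μ f g)
    (hgu : g =ᵐ[μ] u) : L1Tendsto μ f u := by
  refine h.congr fun n => integral_congr_ae ?_
  filter_upwards [hgu] with x hx
  rw [hx]

theorem of_subseq {f : ℕ → S → ℝ} {g : S → ℝ}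
    (h : ∀ ns : ℕ → ℕ, Tendsto ns atTop atTop →
      ∃ ms : ℕ → ℕ, L1Tendsto μ (fun n => f (ns (ms n))) g) :
    L1Tendsto μ f g :=
  tendsto_of_subseq_tendsto h

end L1Tendsto

theorem lyapunov_map_eq_of_subseq_limit {S : Type*} [MeasurableSpace S] {μ : Measure S}
    {Q : Set (S → ℝ)} {H : (S → ℝ) → ℝ} {F : (S → ℝ) → (S → ℝ)} {seq : ℕ → S → ℝ}
    {ψ : ℕ → ℕ} {g : S → ℝ}
    (hHcont : ∀ (f : ℕ → S → ℝ) (g : S → ℝ), (∀ n, f n ∈ Q) → g ∈ Q →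
      L1Tendsto μ f g → Tendsto (fun n => H (f n)) atTop (𝓝 (H g)))
    (hFQ : ∀ p ∈ Q, F p ∈ Q)
    (hFcont : ∀ (f : ℕ → S → ℝ) (g : S → ℝ), (∀ n, f n ∈ Q) → g ∈ Q →
      L1Tendsto μ f g → L1Tendsto μ (fun n => F (f n)) (F g))
    (hseqQ : ∀ n, seq n ∈ Q) (hrec : ∀ t, seq (t + 1) = F (seq t))
    (hmono : Monotone (H ∘ seq)) (hgQ : g ∈ Q) (hψ : Tendsto ψ atTop atTop)
    (hconv : L1Tendsto μ (seq ∘ ψ) g) :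
    H (F g) = H g := by
  have hH : Tendsto (H ∘ seq) atTop (𝓝 (H g)) :=
    (tendsto_iff_tendsto_subseq_of_monotone hmono hψ).2
      (hHcont _ _ (fun n => hseqQ _) hgQ hconv)
  have hHF : Tendsto (fun n => H (F (seq (ψ n)))) atTop (𝓝 (H (F g))) :=
    hHcont _ _ (fun n => hFQ _ (hseqQ _)) (hFQ _ hgQ) (hFcont _ _ (fun n => hseqQ _) hgQ hconv)
  have hHshift : Tendsto (fun n => H (F (seq (ψ n)))) atTop (𝓝 (H g)) := by
    simpa only [Function.comp_def, hrec] using hH.comp ((tendsto_add_atTop_nat 1).comp hψ)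
  exact tendsto_nhds_unique hHF hHshift

theorem skewfit_convergence_to_uniform_general
    {S : Type*} [MeasurableSpace S] (μ : Measure S)
    (u : S → ℝ)
    (Q : Set (S → ℝ))
    (hQcompact : ∀ f : ℕ → S → ℝ, (∀ n, f n ∈ Q) →
      ∃ (g : S → ℝ) (φ : ℕ → ℕ), g ∈ Q ∧ StrictMono φ ∧ L1Tendsto μ (f ∘ φ) g)
    (H : (S → ℝ) → ℝ)
    (hHcont : ∀ (f : ℕ → S → ℝ) (g : S → ℝ), (∀ n, f n ∈ Q) → g ∈ Q →
      L1Tendsto μ f g → Tendsto (fun n => H (f n)) atTop (nhds (H g)))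
    (F : (S → ℝ) → (S → ℝ))
    (hFQ : ∀ p ∈ Q, F p ∈ Q)
    (hFcont : ∀ (f : ℕ → S → ℝ) (g : S → ℝ), (∀ n, f n ∈ Q) → g ∈ Q →
      L1Tendsto μ f g → L1Tendsto μ (fun n => F (f n)) (F g))
    (hFincr : ∀ p ∈ Q, H p ≤ H (F p))
    (hFeq : ∀ p ∈ Q, (H (F p) = H p ↔ p =ᵐ[μ] u))
    (p₁ : S → ℝ) (hp₁ : p₁ ∈ Q)
    (seq : ℕ → S → ℝ) (hseq0 : seq 0 = p₁)
    (hseqrec : ∀ t, seq (t + 1) = F (seq t)) :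
    L1Tendsto μ seq u := by
  have hseqQ : ∀ n, seq n ∈ Q := orbit_mem hFQ (hseq0 ▸ hp₁) hseqrec
  have hmono : Monotone (H ∘ seq) := monotone_comp_orbit hFincr hseqQ hseqrec
  refine L1Tendsto.of_subseq fun ns hns => ?_
  obtain ⟨g, φ, hgQ, hφ, hconv⟩ := hQcompact (seq ∘ ns) fun n => hseqQ _
  have hgu : g =ᵐ[μ] u := (hFeq g hgQ).1 <|
    lyapunov_map_eq_of_subseq_limit hHcont hFQ hFcont hseqQ hseqrec hmono hgQ
      (hns.comp hφ.tendsto_atTop) hconv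
  exact ⟨φ, hconv.congr_ae_right hgu⟩

/-- Skew-Fit Lemma 3.1 (abstract form): if `F : Q → Q` is sequentially `L¹`-continuous,
does not decrease the entropy `H`, and increases it strictly except at the uniform density `u`,
and `Q` is sequentially compact in `L¹(μ)` with `H` finite and sequentially `L¹`-continuous on
`Q`, then the recursively defined sequence `p_{t+1} = F (p_t)` converges to `u` in `L¹(μ)`. -/
theorem skewfit_convergence_to_uniform
    {S : Type*} [MeasurableSpace S] (μ : Measure S)
    (hμ0 : 0 < μ Set.univ) (hμfin : μ Set.univ < ⊤)
    (u : S → ℝ) (hu : u = fun _ => 1 / (μ Set.univ).toReal)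
    (Q : Set (S → ℝ))
    (hQdens : ∀ p ∈ Q, Measurable p ∧ (∀ x, 0 ≤ p x) ∧ ∫ x, p x ∂μ = 1)
    (hQpos : ∀ p ∈ Q, ∀ᵐ x ∂μ, 0 < p x)
    (huQ : u ∈ Q)
    (hQcompact : ∀ f : ℕ → S → ℝ, (∀ n, f n ∈ Q) →
      ∃ (g : S → ℝ) (φ : ℕ → ℕ), g ∈ Q ∧ StrictMono φ ∧ L1Tendsto μ (f ∘ φ) g)
    (H : (S → ℝ) → ℝ)
    (hH : H = fun p => -∫ x, p x * Real.log (p x) ∂μ)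
    (hHfin : ∀ p ∈ Q, Integrable (fun x => p x * Real.log (p x)) μ)
    (hHcont : ∀ (f : ℕ → S → ℝ) (g : S → ℝ), (∀ n, f n ∈ Q) → g ∈ Q →
      L1Tendsto μ f g → Tendsto (fun n => H (f n)) atTop (nhds (H g)))
    (F : (S → ℝ) → (S → ℝ))
    (hFQ : ∀ p ∈ Q, F p ∈ Q)
    (hFcont : ∀ (f : ℕ → S → ℝ) (g : S → ℝ), (∀ n, f n ∈ Q) → g ∈ Q →
      L1Tendsto μ f g → L1Tendsto μ (fun n => F (f n)) (F g))
    (hFincr : ∀ p ∈ Q, H p ≤ H (F p))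
    (hFeq : ∀ p ∈ Q, (H (F p) = H p ↔ p =ᵐ[μ] u))
    (p₁ : S → ℝ) (hp₁ : p₁ ∈ Q)
    (seq : ℕ → S → ℝ) (hseq0 : seq 0 = p₁)
    (hseqrec : ∀ t, seq (t + 1) = F (seq t)) :
    L1Tendsto μ seq u :=
  skewfit_convergence_to_uniform_general μ u Q hQcompact H hHcont F hFQ hFcont hFincr hFeq p₁ hp₁
    seq hseq0 hseqrec
end

section
/- Assume there is an open interval I ⊆ ℝ containing 0 such that for every α ∈ I, ∫ p q^α (1 + |log p| + |log q|)² dμ < ∞ (in particular Z_α ∈ (0,∞) for α ∈ I). If Cov_{p}[log p, log q] > 0, then there exists a constant a > 0 with [-a, 0) ⊆ I such that for all α ∈ [-a, 0), the entropy of the tilted density satisfies H(p_α) > H(p). -/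
/-!
Where `Z_α ≠ 0`, the entropy of `p_α` has the closed form
`H(p_α) = log Z_α - (∫ p q^α log p + α ∫ p q^α log q) / Z_α`.
On a neighbourhood `[a, b]` of `0` inside `I`, the integrands `p q^α c` (`c ∈ {1, log p, log q}`)
and their `α`-derivatives are dominated by `(p q^a + p q^b) (1 + |log p| + |log q|)²`,
so the closed form can be differentiated under the integral sign. Its derivative at `0` is
`E_p[log p] E_p[log q] - E_p[log p log q] = -Cov_p[log p, log q] < 0`, hence `H(p_α) > H(p)`
for `α` slightly below `0`.
-/

open MeasureTheory Real Filter Topology Set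

lemma mul_rpow_le_mul_rpow_add_mul_rpow {w y a b t : ℝ} (hw : 0 ≤ w) (hy : 0 ≤ y)
    (hwy : y = 0 → w = 0) (ht : t ∈ Icc a b) : w * y ^ t ≤ w * y ^ a + w * y ^ b := by
  rcases hy.eq_or_lt with rfl | hy
  · simp [hwy rfl]
  rw [← mul_add]
  gcongr
  rcases le_total 1 y with h | h
  · linarith [rpow_le_rpow_of_exponent_le h ht.2, rpow_nonneg hy.le a]
  · linarith [rpow_le_rpow_of_exponent_ge hy h ht.1, rpow_nonneg hy.le b]

lemma hasDerivAt_mul_rpow_mul {w y c t : ℝ} (hy : 0 ≤ y) (hwy : y = 0 → w = 0) :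
    HasDerivAt (fun s => w * y ^ s * c) (w * y ^ t * (log y * c)) t := by
  rcases hy.eq_or_lt with rfl | hy
  · simpa [hwy rfl] using hasDerivAt_const t (0 : ℝ)
  · exact (((hasStrictDerivAt_const_rpow hy t).hasDerivAt.const_mul w).mul_const c).congr_deriv
      (by ring)

lemma abs_le_one_add_abs_add_abs_sq {a b u : ℝ} (hu : u = 1 ∨ u = a ∨ u = b) :
    |u| ≤ (1 + |a| + |b|) ^ 2 ∧ |b * u| ≤ (1 + |a| + |b|) ^ 2 := by
  have ha := abs_nonneg a
  have hb := abs_nonneg b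
  have hu' : |u| ≤ 1 + |a| + |b| := by
    rcases hu with rfl | rfl | rfl <;> linarith [abs_one (α := ℝ)]
  refine ⟨hu'.trans (le_self_pow₀ (by linarith) two_ne_zero), ?_⟩
  rw [abs_mul, sq]
  exact mul_le_mul (by linarith) hu' (abs_nonneg u) (by linarith)

lemma HasDerivAt.eventually_nhdsLT_lt_of_neg {f : ℝ → ℝ} {f' x : ℝ} (hf : HasDerivAt f f' x)
    (hf' : f' < 0) : ∀ᶠ y in 𝓝[<] x, f x < f y := by
  have hslope := ((hasDerivAt_iff_tendsto_slope.mp hf).mono_left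
    (nhdsLT_le_nhdsNE x)).eventually (eventually_lt_nhds hf')
  filter_upwards [hslope, self_mem_nhdsWithin] with y hy hyx
  rw [slope_def_field] at hy
  by_contra! h
  exact hy.not_ge (div_nonneg_of_nonpos (by linarith) (by linarith [mem_Iio.mp hyx]))

lemma hasDerivAt_log_sub_add_mul_div {Z A C : ℝ → ℝ} {A' C' : ℝ} (hZ : HasDerivAt Z (C 0) 0)
    (hA : HasDerivAt A A' 0) (hC : HasDerivAt C C' 0) (hZ0 : Z 0 = 1) :
    HasDerivAt (fun t => log (Z t) - (A t + t * C t) / Z t) (A 0 * C 0 - A') 0 := by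
  have hZ0' : Z 0 ≠ 0 := by simp [hZ0]
  refine ((hZ.log hZ0').sub ((hA.add ((hasDerivAt_id 0).mul hC)).div hZ hZ0')).congr_deriv ?_
  simp [hZ0]
  ring

section TiltedMoment

variable {X : Type*} [MeasurableSpace X] {μ : Measure X} {p q c M : X → ℝ}

noncomputable def tiltedMoment (μ : Measure X) (p q c : X → ℝ) (t : ℝ) : ℝ :=
  ∫ x, p x * q x ^ t * c x ∂μ

lemma ae_norm_mul_rpow_mul_le (hp0 : ∀ x, 0 ≤ p x) (hq0 : ∀ x, 0 ≤ q x)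
    (habs : ∀ᵐ x ∂μ, q x = 0 → p x = 0) {a b : ℝ} (hcM : ∀ x, |c x| ≤ M x) :
    ∀ᵐ x ∂μ, ∀ t ∈ Icc a b,
      ‖p x * q x ^ t * c x‖ ≤ p x * q x ^ a * M x + p x * q x ^ b * M x := by
  filter_upwards [habs] with x hx t ht
  have hw : 0 ≤ p x * q x ^ t := mul_nonneg (hp0 x) (rpow_nonneg (hq0 x) t)
  calc ‖p x * q x ^ t * c x‖ = p x * q x ^ t * |c x| := by
        rw [norm_mul, norm_of_nonneg hw, norm_eq_abs]
    _ ≤ (p x * q x ^ a + p x * q x ^ b) * M x :=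
        mul_le_mul (mul_rpow_le_mul_rpow_add_mul_rpow (hp0 x) (hq0 x) hx ht) (hcM x)
          (abs_nonneg _) (add_nonneg (mul_nonneg (hp0 x) (rpow_nonneg (hq0 x) a))
            (mul_nonneg (hp0 x) (rpow_nonneg (hq0 x) b)))
    _ = p x * q x ^ a * M x + p x * q x ^ b * M x := add_mul _ _ _

lemma integrable_mul_rpow_mul (hp : Measurable p) (hq : Measurable q) (hc : Measurable c)
    (hp0 : ∀ x, 0 ≤ p x) (hq0 : ∀ x, 0 ≤ q x) (habs : ∀ᵐ x ∂μ, q x = 0 → p x = 0)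
    {a b t : ℝ} (ht : t ∈ Icc a b) (hMa : Integrable (fun x => p x * q x ^ a * M x) μ)
    (hMb : Integrable (fun x => p x * q x ^ b * M x) μ) (hcM : ∀ x, |c x| ≤ M x) :
    Integrable (fun x => p x * q x ^ t * c x) μ :=
  (hMa.add hMb).mono' (by fun_prop : Measurable _).aestronglyMeasurable
    ((ae_norm_mul_rpow_mul_le hp0 hq0 habs hcM).mono fun _ hx => hx t ht)

lemma hasDerivAt_tiltedMoment (hp : Measurable p) (hq : Measurable q) (hc : Measurable c)
    (hp0 : ∀ x, 0 ≤ p x) (hq0 : ∀ x, 0 ≤ q x) (habs : ∀ᵐ x ∂μ, q x = 0 → p x = 0)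
    {a b t₀ : ℝ} (hs : Icc a b ∈ 𝓝 t₀) (hMa : Integrable (fun x => p x * q x ^ a * M x) μ)
    (hMb : Integrable (fun x => p x * q x ^ b * M x) μ) (hcM : ∀ x, |c x| ≤ M x)
    (hlogcM : ∀ x, |log (q x) * c x| ≤ M x) :
    HasDerivAt (tiltedMoment μ p q c) (tiltedMoment μ p q (fun x => log (q x) * c x) t₀) t₀ :=
  (hasDerivAt_integral_of_dominated_loc_of_deriv_le hs
    (Eventually.of_forall fun _ => (by fun_prop : Measurable _).aestronglyMeasurable)
    (integrable_mul_rpow_mul hp hq hc hp0 hq0 habs (mem_of_mem_nhds hs) hMa hMb hcM)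
    (by fun_prop : Measurable _).aestronglyMeasurable
    (ae_norm_mul_rpow_mul_le hp0 hq0 habs hlogcM) (hMa.add hMb)
    (habs.mono fun x hx t _ => hasDerivAt_mul_rpow_mul (hq0 x) hx)).2

end TiltedMoment

section TiltedEntropy

variable {X : Type*} [MeasurableSpace X] {μ : Measure X} {p q : X → ℝ}

noncomputable def tiltedEntropy (μ : Measure X) (p q : X → ℝ) (t : ℝ) : ℝ :=
  log (tiltedMoment μ p q 1 t) - (tiltedMoment μ p q (fun x => log (p x)) t +
    t * tiltedMoment μ p q (fun x => log (q x)) t) / tiltedMoment μ p q 1 t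

lemma tiltedEntropy_zero (hp1 : ∫ x, p x ∂μ = 1) :
    tiltedEntropy μ p q 0 = -∫ x, p x * log (p x) ∂μ := by
  simp [tiltedEntropy, tiltedMoment, hp1]

lemma neg_integral_mul_log_tilted_eq_tiltedEntropy (hp : Measurable p) (hq : Measurable q)
    (hp0 : ∀ x, 0 ≤ p x) (hq0 : ∀ x, 0 ≤ q x) (habs : ∀ᵐ x ∂μ, q x = 0 → p x = 0) {t : ℝ}
    (hM : Integrable (fun x => p x * q x ^ t * (1 + |log (p x)| + |log (q x)|) ^ 2) μ)
    (hZ : tiltedMoment μ p q 1 t ≠ 0) :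
    -∫ x, p x * q x ^ t / tiltedMoment μ p q 1 t * log (p x * q x ^ t / tiltedMoment μ p q 1 t) ∂μ
      = tiltedEntropy μ p q t := by
  have hint : ∀ c : X → ℝ, Measurable c → (∀ x, c x = 1 ∨ c x = log (p x) ∨ c x = log (q x)) →
      Integrable (fun x => p x * q x ^ t * c x) μ := fun c hc hcu =>
    integrable_mul_rpow_mul hp hq hc hp0 hq0 habs ⟨le_rfl, le_rfl⟩ hM hM
      fun x => (abs_le_one_add_abs_add_abs_sq (hcu x)).1
  rw [tiltedEntropy]
  set Z := tiltedMoment μ p q 1 t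
  have hpointwise : ∀ᵐ x ∂μ, p x * q x ^ t / Z * log (p x * q x ^ t / Z) =
      (p x * q x ^ t * log (p x) + t * (p x * q x ^ t * log (q x)) -
        log Z * (p x * q x ^ t * (1 : X → ℝ) x)) / Z := by
    filter_upwards [habs] with x hx
    rcases (hp0 x).eq_or_lt with hpx | hpx
    · simp [← hpx]
    have hqx : 0 < q x := (hq0 x).lt_of_ne fun h => hpx.ne' (hx h.symm)
    rw [log_div (by positivity) hZ, log_mul hpx.ne' (by positivity), log_rpow hqx]
    simp only [Pi.one_apply]
    ring
  have h1 := hint 1 measurable_const (by simp)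
  have hlogp := hint _ hp.log (by simp)
  have hlogq := hint _ hq.log (by simp)
  rw [integral_congr_ae hpointwise, integral_div, integral_sub (hlogp.fun_add (hlogq.const_mul t))
    (h1.const_mul _), integral_add hlogp (hlogq.const_mul t), integral_const_mul,
    integral_const_mul]
  change -((tiltedMoment μ p q _ t + t * tiltedMoment μ p q _ t - log Z * Z) / Z) = _
  field_simp
  ring

lemma hasDerivAt_tiltedEntropy_zero (hp : Measurable p) (hq : Measurable q)
    (hp0 : ∀ x, 0 ≤ p x) (hq0 : ∀ x, 0 ≤ q x) (habs : ∀ᵐ x ∂μ, q x = 0 → p x = 0)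
    (hp1 : ∫ x, p x ∂μ = 1) {a b : ℝ} (hs : Icc a b ∈ 𝓝 0)
    (hMa : Integrable (fun x => p x * q x ^ a * (1 + |log (p x)| + |log (q x)|) ^ 2) μ)
    (hMb : Integrable (fun x => p x * q x ^ b * (1 + |log (p x)| + |log (q x)|) ^ 2) μ) :
    HasDerivAt (tiltedEntropy μ p q) ((∫ x, p x * log (p x) ∂μ) * (∫ x, p x * log (q x) ∂μ) -
      ∫ x, p x * (log (p x) * log (q x)) ∂μ) 0 := by
  have hmoment : ∀ c : X → ℝ, Measurable c →
      (∀ x, c x = 1 ∨ c x = log (p x) ∨ c x = log (q x)) →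
      HasDerivAt (tiltedMoment μ p q c) (tiltedMoment μ p q (fun x => log (q x) * c x) 0) 0 :=
    fun c hc hcu => hasDerivAt_tiltedMoment hp hq hc hp0 hq0 habs hs hMa hMb
      (fun x => (abs_le_one_add_abs_add_abs_sq (hcu x)).1)
      (fun x => (abs_le_one_add_abs_add_abs_sq (hcu x)).2)
  have hZ := hmoment 1 measurable_const (by simp)
  have hA := hmoment _ hp.log (by simp)
  have hC := hmoment _ hq.log (by simp)
  simp only [Pi.one_apply, mul_one] at hZ
  refine (hasDerivAt_log_sub_add_mul_div hZ hA hC (by simp [tiltedMoment, hp1])).congr_deriv ?_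
  simp [tiltedMoment, mul_comm]

end TiltedEntropy

theorem skewed_entropy_increase_general
    {X : Type*} [MeasurableSpace X] (μ : Measure X)
    (p q : X → ℝ)
    (hpmeas : Measurable p) (hp0 : ∀ x, 0 ≤ p x) (hp1 : ∫ x, p x ∂μ = 1)
    (hqmeas : Measurable q) (hq0 : ∀ x, 0 ≤ q x)
    (habs : ∀ᵐ x ∂μ, q x = 0 → p x = 0)
    (Z : ℝ → ℝ) (hZ : Z = fun α => ∫ x, p x * q x ^ α ∂μ)
    (pα : ℝ → X → ℝ) (hpα : pα = fun α x => p x * q x ^ α / Z α)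
    (I : Set ℝ) (hIopen : IsOpen I) (hI0 : (0 : ℝ) ∈ I)
    (hint : ∀ α ∈ I, Integrable
      (fun x => p x * q x ^ α * (1 + |Real.log (p x)| + |Real.log (q x)|) ^ 2) μ)
    (hZpos : ∀ α ∈ I, 0 < Z α)
    (H : (X → ℝ) → ℝ)
    (hH : H = fun r => -∫ x, r x * Real.log (r x) ∂μ)
    (hCov : 0 < (∫ x, p x * (Real.log (p x) * Real.log (q x)) ∂μ) -
      (∫ x, p x * Real.log (p x) ∂μ) * (∫ x, p x * Real.log (q x) ∂μ)) :
    ∃ a > (0 : ℝ), Set.Ico (-a) 0 ⊆ I ∧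
      ∀ α ∈ Set.Ico (-a) (0 : ℝ), H p < H (pα α) := by
  obtain rfl : Z = tiltedMoment μ p q 1 := by ext; simp [hZ, tiltedMoment]
  subst hpα hH
  have hI : ∀ᶠ α in 𝓝 0, α ∈ I := hIopen.mem_nhds hI0
  obtain ⟨a, b, -, hs, habI⟩ := exists_Icc_mem_subset_of_mem_nhds hI
  have hab : a ≤ b := nonempty_Icc.mp (nonempty_of_mem hs)
  have hderiv := hasDerivAt_tiltedEntropy_zero hpmeas hqmeas hp0 hq0 habs hp1 hs
    (hint a (habI ⟨le_rfl, hab⟩)) (hint b (habI ⟨hab, le_rfl⟩))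
  obtain ⟨l, hl, hlI⟩ := mem_nhdsLT_iff_exists_Ico_subset.mp
    ((hI.filter_mono nhdsWithin_le_nhds).and (hderiv.eventually_nhdsLT_lt_of_neg (by linarith)))
  rw [← neg_neg l] at hlI
  refine ⟨-l, neg_pos.mpr hl, fun α hα => (hlI hα).1, fun α hα => ?_⟩
  obtain ⟨hαI, hlt⟩ := hlI hα
  rwa [tiltedEntropy_zero hp1, ← neg_integral_mul_log_tilted_eq_tiltedEntropy hpmeas hqmeas
    hp0 hq0 habs (hint α hαI) (hZpos α hαI).ne'] at hlt

/-- Skew-Fit Lemma 3.2 / A.2: if `Cov_p[log p, log q] > 0`, then there exists `a > 0` with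
`[-a, 0) ⊆ I` such that for all `α ∈ [-a, 0)` the entropy of the tilted density
`p_α = p q^α / Z_α` is strictly larger than the entropy of `p`. -/
theorem skewed_entropy_increase
    {X : Type*} [MeasurableSpace X] (μ : Measure X) [SigmaFinite μ]
    (p q : X → ℝ)
    (hpmeas : Measurable p) (hp0 : ∀ x, 0 ≤ p x) (hp1 : ∫ x, p x ∂μ = 1)
    (hqmeas : Measurable q) (hq0 : ∀ x, 0 ≤ q x) (hq1 : ∫ x, q x ∂μ = 1)
    (habs : ∀ᵐ x ∂μ, q x = 0 → p x = 0)
    (Z : ℝ → ℝ) (hZ : Z = fun α => ∫ x, p x * q x ^ α ∂μ)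
    (pα : ℝ → X → ℝ) (hpα : pα = fun α x => p x * q x ^ α / Z α)
    (I : Set ℝ) (hIopen : IsOpen I) (hI0 : (0 : ℝ) ∈ I)
    (hint : ∀ α ∈ I, Integrable
      (fun x => p x * q x ^ α * (1 + |Real.log (p x)| + |Real.log (q x)|) ^ 2) μ)
    (hZpos : ∀ α ∈ I, 0 < Z α)
    (H : (X → ℝ) → ℝ)
    (hH : H = fun r => -∫ x, r x * Real.log (r x) ∂μ)
    (hCov : 0 < (∫ x, p x * (Real.log (p x) * Real.log (q x)) ∂μ) -
      (∫ x, p x * Real.log (p x) ∂μ) * (∫ x, p x * Real.log (q x) ∂μ)) :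
    ∃ a > (0 : ℝ), Set.Ico (-a) 0 ⊆ I ∧
      ∀ α ∈ Set.Ico (-a) (0 : ℝ), H p < H (pα α) :=
  skewed_entropy_increase_general μ p q hpmeas hp0 hp1 hqmeas hq0 habs Z hZ pα hpα I hIopen hI0 hint
    hZpos H hH hCov
end

section
/- Assume there is an open interval I ⊆ ℝ containing 0 such that for every α ∈ I, ∫ p q^α (1 + |log p| + |log q|)² dμ < ∞ (in particular Z_α ∈ (0,∞) for α ∈ I). Then the function α ↦ H(p_α) is differentiable on I and for every α ∈ I its derivative equals −α · Var_{p_α}[log q] − Cov_{p_α}[log p, log q]. -/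
/-!
With `Z(β) = ∫ p q^β`, `A(β) = ∫ p q^β log p` and `B(β) = ∫ p q^β log q`, the entropy of the
tilted density is `H(p_β) = log Z - (A + β B) / Z`. Each of the three integrals is differentiated
under the integral sign, `d/dβ ∫ p q^β g = ∫ p q^β log q · g`: on a compact interval `[a, b] ⊆ I`
around `α` we have `q^β ≤ q^a + q^b`, so `p (q^a + q^b) (1 + |log p| + |log q|)²` dominates the
derivatives. The quotient rule then produces the variance and covariance under `p_α`.
-/

open MeasureTheory Real Filter Topology

lemma Real.rpow_le_rpow_add_rpow_of_mem_Icc {q a b β : ℝ} (hq : 0 < q) (hβ : β ∈ Set.Icc a b) :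
    q ^ β ≤ q ^ a + q ^ b := by
  rcases le_total 1 q with h1 | h1
  · exact (rpow_le_rpow_of_exponent_le h1 hβ.2).trans (le_add_of_nonneg_left (by positivity))
  · exact (rpow_le_rpow_of_exponent_ge hq h1 hβ.1).trans (le_add_of_nonneg_right (by positivity))

lemma hasDerivAt_mul_rpow_mul_s3 {w q g : ℝ} (hq0 : 0 ≤ q) (hwq : q = 0 → w = 0) (β : ℝ) :
    HasDerivAt (fun β => w * q ^ β * g) (w * q ^ β * (log q * g)) β := by
  rcases hq0.eq_or_lt with hq | hq
  · simp [hwq hq.symm, hasDerivAt_const]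
  · exact (((hasStrictDerivAt_const_rpow hq β).hasDerivAt.const_mul w).mul_const g).congr_deriv
      (by ring)

section

variable {X : Type*} [MeasurableSpace X] {μ : Measure X}

lemma integrable_mul_of_abs_le {f g M : X → ℝ} (hf : Measurable f) (hf0 : ∀ x, 0 ≤ f x)
    (hg : Measurable g) (hgM : ∀ x, |g x| ≤ M x) (hfM : Integrable (fun x => f x * M x) μ) :
    Integrable (fun x => f x * g x) μ := by
  refine hfM.mono' (hf.mul hg).aestronglyMeasurable (Eventually.of_forall fun x => ?_)
  rw [norm_mul, norm_of_nonneg (hf0 x), norm_eq_abs]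
  exact mul_le_mul_of_nonneg_left (hgM x) (hf0 x)

theorem hasDerivAt_integral_mul_rpow_mul {w q g M : X → ℝ} {a b α : ℝ}
    (hw : Measurable w) (hw0 : ∀ x, 0 ≤ w x) (hq : Measurable q) (hq0 : ∀ x, 0 ≤ q x)
    (hwq : ∀ᵐ x ∂μ, q x = 0 → w x = 0) (hg : Measurable g) (hgM : ∀ x, |log (q x) * g x| ≤ M x)
    (hab : Set.Icc a b ∈ 𝓝 α) (hα : Integrable (fun x => w x * q x ^ α * g x) μ)
    (ha : Integrable (fun x => w x * q x ^ a * M x) μ)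
    (hb : Integrable (fun x => w x * q x ^ b * M x) μ) :
    HasDerivAt (fun β => ∫ x, w x * q x ^ β * g x ∂μ)
      (∫ x, w x * q x ^ α * (log (q x) * g x) ∂μ) α := by
  have hbound : ∀ᵐ x ∂μ, ∀ β ∈ Set.Icc a b,
      ‖w x * q x ^ β * (log (q x) * g x)‖ ≤ w x * q x ^ a * M x + w x * q x ^ b * M x := by
    filter_upwards [hwq] with x hx β hβ
    rcases (hq0 x).eq_or_lt with h0 | hpos
    · simp only [hx h0.symm, zero_mul, norm_zero, add_zero, le_refl]
    · have hpow := rpow_le_rpow_add_rpow_of_mem_Icc hpos hβ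
      rw [norm_mul, norm_of_nonneg (mul_nonneg (hw0 x) (rpow_nonneg (hq0 x) β)), norm_eq_abs]
      calc w x * q x ^ β * |log (q x) * g x| ≤ w x * (q x ^ a + q x ^ b) * M x :=
            mul_le_mul (mul_le_mul_of_nonneg_left hpow (hw0 x)) (hgM x) (abs_nonneg _)
              (mul_nonneg (hw0 x) (by positivity))
        _ = _ := by ring
  exact (hasDerivAt_integral_of_dominated_loc_of_deriv_le hab
    (Eventually.of_forall fun β => by fun_prop) hα (by fun_prop) hbound (ha.add hb)
    (hwq.mono fun x hx β _ => hasDerivAt_mul_rpow_mul_s3 (hq0 x) hx β)).2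

theorem neg_integral_tilted_mul_log {p q : X → ℝ} {β Z : ℝ} (hp0 : ∀ x, 0 ≤ p x)
    (hq0 : ∀ x, 0 ≤ q x) (habs : ∀ᵐ x ∂μ, q x = 0 → p x = 0)
    (hZ : ∫ x, p x * q x ^ β ∂μ = Z) (hZ0 : Z ≠ 0)
    (hint : Integrable (fun x => p x * q x ^ β) μ)
    (hint_logp : Integrable (fun x => p x * q x ^ β * log (p x)) μ)
    (hint_logq : Integrable (fun x => p x * q x ^ β * log (q x)) μ) :
    -∫ x, p x * q x ^ β / Z * log (p x * q x ^ β / Z) ∂μ =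
      log Z -
        ((∫ x, p x * q x ^ β * log (p x) ∂μ) + β * ∫ x, p x * q x ^ β * log (q x) ∂μ) / Z := by
  have hpointwise : (fun x => p x * q x ^ β / Z * log (p x * q x ^ β / Z)) =ᵐ[μ]
      fun x => (p x * q x ^ β * log (p x) + β * (p x * q x ^ β * log (q x))
        - log Z * (p x * q x ^ β)) / Z := by
    filter_upwards [habs] with x hx
    rcases (hp0 x).eq_or_lt with hp | hp
    · simp [← hp]
    have hq : 0 < q x := (hq0 x).lt_of_ne fun h => hp.ne' (hx h.symm)
    rw [log_div (by positivity) hZ0, log_mul hp.ne' (rpow_pos_of_pos hq β).ne', log_rpow hq]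
    ring
  have hint_logq' := hint_logq.const_mul β
  have hint_sum : Integrable (fun x => p x * q x ^ β * log (p x)
      + β * (p x * q x ^ β * log (q x))) μ := hint_logp.add hint_logq'
  rw [integral_congr_ae hpointwise, integral_div, integral_sub hint_sum (hint.const_mul _),
    integral_add hint_logp hint_logq', integral_const_mul, integral_const_mul, hZ]
  field_simp
  ring

lemma integrable_tilted_mul {p q g : X → ℝ} {β : ℝ} (hp : Measurable p) (hp0 : ∀ x, 0 ≤ p x)
    (hq : Measurable q) (hq0 : ∀ x, 0 ≤ q x) (hg : Measurable g)
    (hgL : ∀ x, |g x| ≤ 1 + |log (p x)| + |log (q x)|)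
    (hint : Integrable
      (fun x => p x * q x ^ β * (1 + |log (p x)| + |log (q x)|) ^ 2) μ) :
    Integrable (fun x => p x * q x ^ β * g x) μ := by
  refine integrable_mul_of_abs_le (by fun_prop)
    (fun x => mul_nonneg (hp0 x) (rpow_nonneg (hq0 x) β)) hg (fun x => ?_) hint
  have hL : 1 ≤ 1 + |log (p x)| + |log (q x)| := by
    linarith [abs_nonneg (log (p x)), abs_nonneg (log (q x))]
  exact (hgL x).trans (le_self_pow₀ hL two_ne_zero)

theorem hasDerivAt_integral_tilted_mul {p q g : X → ℝ} {I : Set ℝ} {α : ℝ} (hp : Measurable p)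
    (hp0 : ∀ x, 0 ≤ p x) (hq : Measurable q) (hq0 : ∀ x, 0 ≤ q x)
    (habs : ∀ᵐ x ∂μ, q x = 0 → p x = 0) (hg : Measurable g)
    (hgL : ∀ x, |g x| ≤ 1 + |log (p x)| + |log (q x)|) (hI : IsOpen I)
    (hint : ∀ β ∈ I, Integrable
      (fun x => p x * q x ^ β * (1 + |log (p x)| + |log (q x)|) ^ 2) μ) (hα : α ∈ I) :
    HasDerivAt (fun β => ∫ x, p x * q x ^ β * g x ∂μ)
      (∫ x, p x * q x ^ α * (log (q x) * g x) ∂μ) α := by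
  obtain ⟨a, b, ⟨hαa, hαb⟩, hab, habI⟩ := exists_Icc_mem_subset_of_mem_nhds (hI.mem_nhds hα)
  refine hasDerivAt_integral_mul_rpow_mul hp hp0 hq hq0 habs hg (fun x => ?_) hab
    (integrable_tilted_mul hp hp0 hq hq0 hg hgL (hint α hα))
    (hint a (habI ⟨le_rfl, hαa.trans hαb⟩)) (hint b (habI ⟨hαa.trans hαb, le_rfl⟩))
  rw [abs_mul, sq]
  exact mul_le_mul (by linarith [abs_nonneg (log (p x))]) (hgL x) (abs_nonneg _)
    (by positivity)

end

theorem skewed_entropy_deriv_general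
    {X : Type*} [MeasurableSpace X] (μ : Measure X)
    (p q : X → ℝ)
    (hpmeas : Measurable p) (hp0 : ∀ x, 0 ≤ p x)
    (hqmeas : Measurable q) (hq0 : ∀ x, 0 ≤ q x)
    (habs : ∀ᵐ x ∂μ, q x = 0 → p x = 0)
    (Z : ℝ → ℝ) (hZ : Z = fun α => ∫ x, p x * q x ^ α ∂μ)
    (pα : ℝ → X → ℝ) (hpα : pα = fun α x => p x * q x ^ α / Z α)
    (I : Set ℝ) (hIopen : IsOpen I)
    (hint : ∀ α ∈ I, Integrable
      (fun x => p x * q x ^ α * (1 + |Real.log (p x)| + |Real.log (q x)|) ^ 2) μ)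
    (hZpos : ∀ α ∈ I, 0 < Z α)
    (H : (X → ℝ) → ℝ)
    (hH : H = fun r => -∫ x, r x * Real.log (r x) ∂μ) :
    ∀ α ∈ I, HasDerivAt (fun β => H (pα β))
      (-α * ((∫ x, pα α x * Real.log (q x) ^ 2 ∂μ) -
          (∫ x, pα α x * Real.log (q x) ∂μ) ^ 2)
        - ((∫ x, pα α x * (Real.log (p x) * Real.log (q x)) ∂μ) -
          (∫ x, pα α x * Real.log (p x) ∂μ) * (∫ x, pα α x * Real.log (q x) ∂μ))) α := by
  intro α hα
  subst hZ hpα hH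
  beta_reduce at hZpos ⊢
  have bound_one : ∀ x, |(1 : ℝ)| ≤ 1 + |log (p x)| + |log (q x)| := fun x => by
    rw [abs_one]; linarith [abs_nonneg (log (p x)), abs_nonneg (log (q x))]
  have bound_logp : ∀ x, |log (p x)| ≤ 1 + |log (p x)| + |log (q x)| := fun x => by
    linarith [abs_nonneg (log (q x))]
  have bound_logq : ∀ x, |log (q x)| ≤ 1 + |log (p x)| + |log (q x)| := fun x => by
    linarith [abs_nonneg (log (p x))]
  have hZ' := hasDerivAt_integral_tilted_mul hpmeas hp0 hqmeas hq0 habs measurable_const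
    bound_one hIopen hint hα
  have hA' := hasDerivAt_integral_tilted_mul hpmeas hp0 hqmeas hq0 habs
    hpmeas.log bound_logp hIopen hint hα
  have hB' := hasDerivAt_integral_tilted_mul hpmeas hp0 hqmeas hq0 habs
    hqmeas.log bound_logq hIopen hint hα
  simp only [mul_one] at hZ'
  have hentropy := eventually_of_mem (hIopen.mem_nhds hα) fun β hβ =>
    neg_integral_tilted_mul_log hp0 hq0 habs rfl (hZpos β hβ).ne'
    (by simpa using
      integrable_tilted_mul hpmeas hp0 hqmeas hq0 measurable_const bound_one (hint β hβ))
    (integrable_tilted_mul hpmeas hp0 hqmeas hq0 hpmeas.log bound_logp (hint β hβ))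
    (integrable_tilted_mul hpmeas hp0 hqmeas hq0 hqmeas.log bound_logq (hint β hβ))
  refine (((hZ'.log (hZpos α hα).ne').sub ((hA'.add ((hasDerivAt_id α).mul hB')).div hZ'
    (hZpos α hα).ne')).congr_of_eventuallyEq hentropy).congr_deriv ?_
  simp only [Pi.add_apply, Pi.mul_apply, id_eq, div_mul_eq_mul_div, integral_div, ← sq,
    mul_comm (log (q _)) (log (p _))]
  field_simp
  ring

/-- The entropy of the tilted density `p_α = p q^α / Z_α` is differentiable on `I`, with
derivative `−α·Var_{p_α}[log q] − Cov_{p_α}[log p, log q]` at each `α ∈ I`. -/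
theorem skewed_entropy_deriv
    {X : Type*} [MeasurableSpace X] (μ : Measure X) [SigmaFinite μ]
    (p q : X → ℝ)
    (hpmeas : Measurable p) (hp0 : ∀ x, 0 ≤ p x) (hp1 : ∫ x, p x ∂μ = 1)
    (hqmeas : Measurable q) (hq0 : ∀ x, 0 ≤ q x) (hq1 : ∫ x, q x ∂μ = 1)
    (habs : ∀ᵐ x ∂μ, q x = 0 → p x = 0)
    (Z : ℝ → ℝ) (hZ : Z = fun α => ∫ x, p x * q x ^ α ∂μ)
    (pα : ℝ → X → ℝ) (hpα : pα = fun α x => p x * q x ^ α / Z α)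
    (I : Set ℝ) (hIopen : IsOpen I) (hI0 : (0 : ℝ) ∈ I)
    (hint : ∀ α ∈ I, Integrable
      (fun x => p x * q x ^ α * (1 + |Real.log (p x)| + |Real.log (q x)|) ^ 2) μ)
    (hZpos : ∀ α ∈ I, 0 < Z α)
    (H : (X → ℝ) → ℝ)
    (hH : H = fun r => -∫ x, r x * Real.log (r x) ∂μ) :
    ∀ α ∈ I, HasDerivAt (fun β => H (pα β))
      (-α * ((∫ x, pα α x * Real.log (q x) ^ 2 ∂μ) -
          (∫ x, pα α x * Real.log (q x) ∂μ) ^ 2)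
        - ((∫ x, pα α x * (Real.log (p x) * Real.log (q x)) ∂μ) -
          (∫ x, pα α x * Real.log (p x) ∂μ) * (∫ x, pα α x * Real.log (q x) ∂μ))) α :=
  skewed_entropy_deriv_general μ p q hpmeas hp0 hqmeas hq0 habs Z hZ pα hpα I hIopen hint hZpos H hH
end

section
/- Let p be a probability density on S that is positive μ-almost everywhere, and let α ∈ [0,1). Recursively define p₁ = p and p_{t+1}(x) = p_t(x)^α / Z_t, where Z_t = ∫ p_t(x)^α dμ(x). Then every normalizer Z_t is finite and positive (so the sequence is well defined), and the sequence (p_t) converges in L¹(μ) to the uniform density u. -/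
/-!
By induction `p_t = p ^ (α ^ t) / ∫ p ^ (α ^ t)`. Since `α ^ t → 0` and `p > 0` a.e., the powers
`p ^ (α ^ t)` tend to `1` a.e.; they are dominated by `1 + p`, so they tend to `1` in `L¹`, and
normalizing an `L¹`-convergent sequence preserves convergence, giving `p_t → 1 / μ(S)` in `L¹`.
-/

open MeasureTheory Real Filter Topology

namespace Real

lemma rpow_le_one_add {x β : ℝ} (hx : 0 ≤ x) (hβ : β ∈ Set.Icc (0 : ℝ) 1) : x ^ β ≤ 1 + x := by
  rcases le_or_gt x 1 with h | h
  · linarith [rpow_le_one hx h hβ.1]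
  · linarith [rpow_le_self_of_one_le h.le hβ.2]

end Real

section

variable {S : Type _} [MeasurableSpace S] {μ : Measure S}

lemma MeasureTheory.Integrable.rpow_of_nonneg [IsFiniteMeasure μ] {f : S → ℝ}
    (hf : Integrable f μ) (hf0 : ∀ x, 0 ≤ f x) {β : ℝ} (hβ : β ∈ Set.Icc (0 : ℝ) 1) :
    Integrable (fun x => f x ^ β) μ :=
  ((integrable_const 1).add hf).mono' (hf.aemeasurable.pow_const β).aestronglyMeasurable <|
    .of_forall fun x => by
      rw [norm_of_nonneg (rpow_nonneg (hf0 x) β)]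
      exact rpow_le_one_add (hf0 x) hβ

lemma integral_rpow_pos {f : S → ℝ} (hμ : 0 < μ Set.univ) (hf0 : ∀ x, 0 ≤ f x)
    (hfpos : ∀ᵐ x ∂μ, 0 < f x) {β : ℝ} (hfβ : Integrable (fun x => f x ^ β) μ) :
    0 < ∫ x, f x ^ β ∂μ := by
  rw [integral_pos_iff_support_of_nonneg (fun x => rpow_nonneg (hf0 x) β) hfβ]
  refine hμ.trans_le (measure_mono_ae ?_)
  filter_upwards [hfpos] with x hx _
  exact (rpow_pos_of_pos hx β).ne'

lemma tendsto_integral_abs_rpow_sub_one [IsFiniteMeasure μ] {f : S → ℝ} (hf : Integrable f μ)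
    (hf0 : ∀ x, 0 ≤ f x) (hfpos : ∀ᵐ x ∂μ, 0 < f x) {β : ℕ → ℝ}
    (hβ : ∀ n, β n ∈ Set.Icc (0 : ℝ) 1) (hβ0 : Tendsto β atTop (𝓝 0)) :
    Tendsto (fun n => ∫ x, |f x ^ β n - 1| ∂μ) atTop (𝓝 0) := by
  have hlim : ∀ᵐ x ∂μ, Tendsto (fun n => |f x ^ β n - 1|) atTop (𝓝 0) := by
    filter_upwards [hfpos] with x hx
    have := ((continuousAt_const_rpow hx.ne').tendsto.comp hβ0).sub_const 1 |>.abs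
    simpa using this
  have hbound : ∀ n, ∀ᵐ x ∂μ, ‖|f x ^ β n - 1|‖ ≤ 2 + f x := fun n => .of_forall fun x => by
    rw [Real.norm_eq_abs, abs_abs, abs_le]
    constructor <;> linarith [rpow_nonneg (hf0 x) (β n), rpow_le_one_add (hf0 x) (hβ n)]
  simpa using tendsto_integral_of_dominated_convergence _
    (fun n => ((hf.aemeasurable.pow_const (β n)).sub_const 1).abs.aestronglyMeasurable)
    ((integrable_const 2).add hf) hbound hlim

lemma tendsto_integral_of_tendsto_integral_abs_sub {ι : Type*} {l : Filter ι} {F : ι → S → ℝ}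
    {g : S → ℝ} (hF : ∀ i, Integrable (F i) μ) (hg : Integrable g μ)
    (hFg : Tendsto (fun i => ∫ x, |F i x - g x| ∂μ) l (𝓝 0)) :
    Tendsto (fun i => ∫ x, F i x ∂μ) l (𝓝 (∫ x, g x ∂μ)) := by
  rw [tendsto_iff_norm_sub_tendsto_zero]
  refine squeeze_zero (fun i => norm_nonneg _) (fun i => ?_) hFg
  rw [← integral_sub (hF i) hg]
  exact norm_integral_le_integral_norm _

lemma tendsto_integral_abs_div_integral_sub {ι : Type*} {l : Filter ι} {F : ι → S → ℝ}
    {g : S → ℝ} (hF : ∀ i, Integrable (F i) μ) (hg : Integrable g μ) (hg0 : ∫ x, g x ∂μ ≠ 0)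
    (hFg : Tendsto (fun i => ∫ x, |F i x - g x| ∂μ) l (𝓝 0)) :
    Tendsto (fun i => ∫ x, |F i x / ∫ y, F i y ∂μ - g x / ∫ y, g y ∂μ| ∂μ) l (𝓝 0) := by
  have hinv : Tendsto (fun i => (∫ y, F i y ∂μ)⁻¹) l (𝓝 (∫ y, g y ∂μ)⁻¹) :=
    (tendsto_integral_of_tendsto_integral_abs_sub hF hg hFg).inv₀ hg0
  have hbound : Tendsto (fun i => (∫ x, |F i x - g x| ∂μ) * |(∫ y, F i y ∂μ)⁻¹|
      + (∫ x, |g x| ∂μ) * |(∫ y, F i y ∂μ)⁻¹ - (∫ y, g y ∂μ)⁻¹|) l (𝓝 0) := by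
    simpa using (hFg.mul hinv.abs).add
      ((hinv.sub_const (∫ y, g y ∂μ)⁻¹).abs.const_mul (∫ x, |g x| ∂μ))
  refine squeeze_zero (fun i => integral_nonneg fun x => abs_nonneg _) (fun i => ?_) hbound
  have hpointwise : ∀ x, |F i x / ∫ y, F i y ∂μ - g x / ∫ y, g y ∂μ|
      ≤ |F i x - g x| * |(∫ y, F i y ∂μ)⁻¹| + |g x| * |(∫ y, F i y ∂μ)⁻¹ - (∫ y, g y ∂μ)⁻¹| := by
    intro x
    -- a ring identity, so no case `∫ F i = 0` is needed
    have hsplit : F i x / ∫ y, F i y ∂μ - g x / ∫ y, g y ∂μ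
        = (F i x - g x) * (∫ y, F i y ∂μ)⁻¹ + g x * ((∫ y, F i y ∂μ)⁻¹ - (∫ y, g y ∂μ)⁻¹) := by
      ring
    rw [hsplit, ← abs_mul, ← abs_mul]
    exact abs_add_le _ _
  have hdiff : Integrable (fun x => |F i x - g x| * |(∫ y, F i y ∂μ)⁻¹|) μ :=
    ((hF i).sub hg).abs.mul_const _
  have hgabs : Integrable (fun x => |g x| * |(∫ y, F i y ∂μ)⁻¹ - (∫ y, g y ∂μ)⁻¹|) μ :=
    hg.abs.mul_const _
  calc ∫ x, |F i x / ∫ y, F i y ∂μ - g x / ∫ y, g y ∂μ| ∂μ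
      ≤ ∫ x, (|F i x - g x| * |(∫ y, F i y ∂μ)⁻¹|
          + |g x| * |(∫ y, F i y ∂μ)⁻¹ - (∫ y, g y ∂μ)⁻¹|) ∂μ :=
        integral_mono_of_nonneg (.of_forall fun x => abs_nonneg _)
          (hdiff.add hgabs) (.of_forall hpointwise)
    _ = _ := by rw [integral_add hdiff hgabs, integral_mul_const, integral_mul_const]

variable (μ) in
noncomputable def temper (β : ℝ) (f : S → ℝ) : S → ℝ :=
  fun x => f x ^ β / ∫ y, f y ^ β ∂μ

lemma temper_one {f : S → ℝ} (hf : ∫ x, f x ∂μ = 1) : temper μ 1 f = f := by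
  ext x
  simp [temper, hf]

lemma temper_rpow {f : S → ℝ} (hf0 : ∀ x, 0 ≤ f x) (β α : ℝ) (x : S) :
    temper μ β f x ^ α = f x ^ (β * α) / (∫ y, f y ^ β ∂μ) ^ α := by
  rw [temper, div_rpow (rpow_nonneg (hf0 x) β) (integral_nonneg fun y => rpow_nonneg (hf0 y) β),
    ← rpow_mul (hf0 x)]

lemma temper_temper {f : S → ℝ} (hf0 : ∀ x, 0 ≤ f x) {β : ℝ} (hZ : 0 < ∫ x, f x ^ β ∂μ)
    (α : ℝ) : temper μ α (temper μ β f) = temper μ (β * α) f := by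
  have hZα : (∫ x, f x ^ β ∂μ) ^ α ≠ 0 := (rpow_pos_of_pos hZ α).ne'
  ext x
  change temper μ β f x ^ α / ∫ y, temper μ β f y ^ α ∂μ = _
  simp only [temper_rpow hf0 β α, integral_div]
  rw [div_div_div_cancel_right₀ hZα, temper]

end

theorem tempered_iteration_converges_to_uniform_general
    {S : Type*} [MeasurableSpace S] (μ : Measure S)
    (hμ0 : 0 < μ Set.univ) (hμfin : μ Set.univ < ⊤)
    (p : S → ℝ) (hp0 : ∀ x, 0 ≤ p x) (hp1 : ∫ x, p x ∂μ = 1)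
    (hppos : ∀ᵐ x ∂μ, 0 < p x)
    (α : ℝ) (hα : α ∈ Set.Ico (0 : ℝ) 1)
    (seq : ℕ → S → ℝ) (hseq0 : seq 0 = p)
    (hseqrec : ∀ t, seq (t + 1) = fun x => seq t x ^ α / ∫ y, seq t y ^ α ∂μ)
    (u : S → ℝ) (hu : u = fun _ => 1 / (μ Set.univ).toReal) :
    (∀ t, Integrable (fun x => seq t x ^ α) μ ∧ 0 < ∫ x, seq t x ^ α ∂μ) ∧
      Tendsto (fun t => ∫ x, |seq t x - u x| ∂μ) atTop (nhds 0) := by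
  have : IsFiniteMeasure μ := ⟨hμfin⟩
  have hpint : Integrable p μ := Integrable.of_integral_ne_zero (hp1 ▸ one_ne_zero)
  have hαt (t : ℕ) : α ^ t ∈ Set.Icc (0 : ℝ) 1 := ⟨pow_nonneg hα.1 t, pow_le_one₀ hα.1 hα.2.le⟩
  have hint (t : ℕ) : Integrable (fun x => p x ^ α ^ t) μ := hpint.rpow_of_nonneg hp0 (hαt t)
  have hZ (t : ℕ) : 0 < ∫ x, p x ^ α ^ t ∂μ := integral_rpow_pos hμ0 hp0 hppos (hint t)
  have hseq (t : ℕ) : seq t = temper μ (α ^ t) p := by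
    induction t with
    | zero => rw [hseq0, pow_zero, temper_one hp1]
    | succ t ih => rw [hseqrec, ih, pow_succ, ← temper_temper hp0 (hZ t)]; rfl
  refine ⟨fun t => ?_, ?_⟩
  · simp only [hseq, temper_rpow hp0, ← pow_succ, integral_div]
    exact ⟨(hint (t + 1)).div_const _, div_pos (hZ (t + 1)) (rpow_pos_of_pos (hZ t) α)⟩
  · have hM : ∫ _, (1 : ℝ) ∂μ ≠ 0 := by
      simp [measureReal_def, ENNReal.toReal_eq_zero_iff, hμ0.ne', hμfin.ne]
    have hu1 : u = fun _ => 1 / ∫ _, (1 : ℝ) ∂μ := by simp [hu, measureReal_def]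
    simp only [hseq, hu1]
    exact tendsto_integral_abs_div_integral_sub hint (integrable_const 1) hM
      (tendsto_integral_abs_rpow_sub_one hpint hp0 hppos hαt
        (tendsto_pow_atTop_nhds_zero_of_lt_one hα.1 hα.2))

/-- Skew-Fit Lemma A.3 (simple case): repeatedly tempering a positive density by an
exponent `α ∈ [0,1)` and renormalizing, i.e. `p_{t+1} = p_t^α / Z_t` with
`Z_t = ∫ p_t^α dμ`, yields well-defined (finite, positive) normalizers, and the sequence
of densities converges in `L¹(μ)` to the uniform density `u = 1/μ(S)`. -/
theorem tempered_iteration_converges_to_uniform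
    {S : Type*} [MeasurableSpace S] (μ : Measure S)
    (hμ0 : 0 < μ Set.univ) (hμfin : μ Set.univ < ⊤)
    (p : S → ℝ) (hpmeas : Measurable p) (hp0 : ∀ x, 0 ≤ p x) (hp1 : ∫ x, p x ∂μ = 1)
    (hppos : ∀ᵐ x ∂μ, 0 < p x)
    (α : ℝ) (hα : α ∈ Set.Ico (0 : ℝ) 1)
    (seq : ℕ → S → ℝ) (hseq0 : seq 0 = p)
    (hseqrec : ∀ t, seq (t + 1) = fun x => seq t x ^ α / ∫ y, seq t y ^ α ∂μ)
    (u : S → ℝ) (hu : u = fun _ => 1 / (μ Set.univ).toReal) :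
    (∀ t, Integrable (fun x => seq t x ^ α) μ ∧ 0 < ∫ x, seq t x ^ α ∂μ) ∧
      Tendsto (fun t => ∫ x, |seq t x - u x| ∂μ) atTop (nhds 0) :=
  tempered_iteration_converges_to_uniform_general μ hμ0 hμfin p hp0 hp1 hppos α hα seq hseq0 hseqrec
    u hu
end

section
/- Let p be a probability density on S that is positive μ-almost everywhere and such that p·log p is μ-integrable. For θ ∈ (0,1], the normalizer Z_θ = ∫ p(x)^θ dμ(x) is finite and positive; define the tempered density p_θ(x) = p(x)^θ / Z_θ. Then p_θ·log p_θ is μ-integrable for every θ ∈ (0,1], and the function θ ↦ H(p_θ) is nonincreasing on (0,1]; in particular H(p_θ) ≥ H(p) for every θ ∈ (0,1]. -/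
open MeasureTheory Real Filter

lemma aux_rpow_log_bound {t θ : ℝ} (ht : 0 ≤ t) (hθ1 : 0 < θ) (hθ2 : θ ≤ 1) :
    |t ^ θ * Real.log t| ≤ 1 / θ + |t * Real.log t| := by
  rcases eq_or_lt_of_le ht with h | h
  · rw [← h, Real.zero_rpow hθ1.ne']
    simp
    positivity
  rcases le_or_gt t 1 with h1 | h1
  · have hlt : Real.log t ≤ 0 := Real.log_nonpos ht h1
    have htθ : 0 < t ^ θ := Real.rpow_pos_of_pos h θ
    have key : t ^ θ * (-Real.log t) ≤ 1 / θ := by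
      have h2 : -Real.log t = (1 / θ) * (-Real.log (t ^ θ)) := by
        rw [Real.log_rpow h]; field_simp
      have h3 : -Real.log (t ^ θ) ≤ 1 / t ^ θ - 1 := by
        have h4 := Real.log_le_sub_one_of_pos (x := 1 / t ^ θ) (by positivity)
        rw [Real.log_div one_ne_zero (ne_of_gt htθ), Real.log_one] at h4
        linarith
      calc t ^ θ * (-Real.log t) = (1 / θ) * (t ^ θ * (-Real.log (t ^ θ))) := by
            rw [h2]; ring
        _ ≤ (1 / θ) * (t ^ θ * (1 / t ^ θ - 1)) := by
            apply mul_le_mul_of_nonneg_left _ (by positivity)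
            exact mul_le_mul_of_nonneg_left h3 htθ.le
        _ = (1 / θ) * (1 - t ^ θ) := by field_simp
        _ ≤ 1 / θ := by
            have h5 : 0 ≤ (1/θ) * (t ^ θ) := by positivity
            nlinarith [h5]
    have habs : |t ^ θ * Real.log t| = t ^ θ * (-Real.log t) := by
      rw [abs_of_nonpos (mul_nonpos_of_nonneg_of_nonpos htθ.le hlt)]; ring
    rw [habs]
    have := abs_nonneg (t * Real.log t)
    linarith
  · have hl : 0 ≤ Real.log t := Real.log_nonneg h1.le
    have h2 : t ^ θ ≤ t := by
      nth_rewrite 2 [← Real.rpow_one t]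
      exact Real.rpow_le_rpow_of_exponent_le h1.le hθ2
    have htθ : 0 ≤ t ^ θ := Real.rpow_nonneg ht θ
    rw [abs_of_nonneg (mul_nonneg htθ hl), abs_of_nonneg (mul_nonneg (by linarith) hl)]
    have h3 : t ^ θ * Real.log t ≤ t * Real.log t := mul_le_mul_of_nonneg_right h2 hl
    have h4 : 0 < 1 / θ := by positivity
    linarith

/-- For a positive density `p` with integrable `p·log p` on a finite measure space, the
tempered densities `p_θ = p^θ / Z_θ` (for `θ ∈ (0,1]`) are well defined, have integrable
`p_θ·log p_θ`, and their entropy `H(p_θ)` is nonincreasing in `θ` on `(0,1]`; in particular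
`H(p_θ) ≥ H(p)` for all `θ ∈ (0,1]`. -/
theorem tempered_entropy_antitone
    {S : Type*} [MeasurableSpace S] (μ : Measure S)
    (hμ0 : 0 < μ Set.univ) (hμfin : μ Set.univ < ⊤)
    (p : S → ℝ) (hpmeas : Measurable p) (hp0 : ∀ x, 0 ≤ p x) (hp1 : ∫ x, p x ∂μ = 1)
    (hppos : ∀ᵐ x ∂μ, 0 < p x)
    (hplog : Integrable (fun x => p x * Real.log (p x)) μ)
    (Z : ℝ → ℝ) (hZ : Z = fun θ => ∫ x, p x ^ θ ∂μ)
    (pθ : ℝ → S → ℝ) (hpθ : pθ = fun θ x => p x ^ θ / Z θ)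
    (H : (S → ℝ) → ℝ)
    (hH : H = fun r => -∫ x, r x * Real.log (r x) ∂μ) :
    (∀ θ ∈ Set.Ioc (0 : ℝ) 1, Integrable (fun x => p x ^ θ) μ ∧ 0 < Z θ) ∧
    (∀ θ ∈ Set.Ioc (0 : ℝ) 1, Integrable (fun x => pθ θ x * Real.log (pθ θ x)) μ) ∧
    AntitoneOn (fun θ => H (pθ θ)) (Set.Ioc (0 : ℝ) 1) ∧
    (∀ θ ∈ Set.Ioc (0 : ℝ) 1, H p ≤ H (pθ θ)) := by
  have hfin : IsFiniteMeasure μ := ⟨hμfin⟩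
  have hpint : Integrable p μ := by
    by_contra h
    rw [integral_undef h] at hp1
    exact one_ne_zero hp1.symm
  -- integrability of p^θ
  have hint_pow : ∀ θ ∈ Set.Ioc (0 : ℝ) 1, Integrable (fun x => p x ^ θ) μ := by
    intro θ hθ
    have hb : ∀ x, ‖p x ^ θ‖ ≤ 1 + p x := by
      intro x
      rw [Real.norm_eq_abs, abs_of_nonneg (Real.rpow_nonneg (hp0 x) θ)]
      rcases le_or_gt (p x) 1 with h | h
      · have := Real.rpow_le_one (hp0 x) h (le_of_lt hθ.1)
        linarith [hp0 x]
      · have h1 : p x ^ θ ≤ p x ^ (1 : ℝ) :=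
          Real.rpow_le_rpow_of_exponent_le h.le hθ.2
        rw [Real.rpow_one] at h1
        linarith
    exact ((integrable_const (1 : ℝ)).add hpint).mono'
      (hpmeas.pow measurable_const).aestronglyMeasurable (ae_of_all _ hb)
  -- positivity of Z
  have hZpos : ∀ θ ∈ Set.Ioc (0 : ℝ) 1, 0 < Z θ := by
    intro θ hθ
    rw [hZ]
    have hpos : ∀ᵐ x ∂μ, 0 < p x ^ θ := hppos.mono fun x hx => Real.rpow_pos_of_pos hx θ
    have hnn : 0 ≤ᵐ[μ] fun x => p x ^ θ := hpos.mono fun x hx => hx.le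
    rw [integral_pos_iff_support_of_nonneg_ae hnn (hint_pow θ hθ)]
    have hsub : μ (Function.support fun x => p x ^ θ)ᶜ = 0 := by
      apply measure_mono_null (fun x hx => ?_) (ae_iff.mp hpos)
      simp only [Function.mem_support, Set.mem_compl_iff, not_not] at hx
      simp only [Set.mem_setOf_eq, hx]
      exact lt_irrefl 0
    have := measure_univ_le_add_compl (μ := μ) (Function.support fun x => p x ^ θ)
    rw [hsub, add_zero] at this
    exact lt_of_lt_of_le hμ0 this
  -- integrability of p^θ * log p
  have hint_plog : ∀ θ ∈ Set.Ioc (0 : ℝ) 1,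
      Integrable (fun x => p x ^ θ * Real.log (p x)) μ := by
    intro θ hθ
    apply ((integrable_const (1 / θ)).add hplog.abs).mono'
      ((hpmeas.pow measurable_const).mul hpmeas.log).aestronglyMeasurable
    refine ae_of_all _ fun x => ?_
    rw [Real.norm_eq_abs]
    exact aux_rpow_log_bound (hp0 x) hθ.1 hθ.2
  -- integrability of pθ
  have hint_pθ : ∀ θ ∈ Set.Ioc (0 : ℝ) 1, Integrable (pθ θ) μ := by
    intro θ hθ
    rw [hpθ]
    exact (hint_pow θ hθ).div_const (Z θ)
  -- ∫ pθ = 1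
  have hpθ1 : ∀ θ ∈ Set.Ioc (0 : ℝ) 1, ∫ x, pθ θ x ∂μ = 1 := by
    intro θ hθ
    rw [hpθ]
    simp only
    have hZv : ∫ x, p x ^ θ ∂μ = Z θ := by rw [hZ]
    rw [integral_div, hZv, div_self (hZpos θ hθ).ne']
  -- a.e. identity for pθ θ₁ * log (pθ θ₂)
  have hae : ∀ θ₁ ∈ Set.Ioc (0 : ℝ) 1, ∀ θ₂ ∈ Set.Ioc (0 : ℝ) 1,
      (fun x => pθ θ₁ x * Real.log (pθ θ₂ x)) =ᵐ[μ]
      (fun x => θ₂ / Z θ₁ * (p x ^ θ₁ * Real.log (p x))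
        - Real.log (Z θ₂) / Z θ₁ * p x ^ θ₁) := by
    intro θ₁ h₁ θ₂ h₂
    filter_upwards [hppos] with x hx
    rw [hpθ]
    simp only
    rw [Real.log_div (Real.rpow_pos_of_pos hx θ₂).ne' (hZpos θ₂ h₂).ne',
      Real.log_rpow hx]
    ring
  -- integrability of pθ θ₁ * log (pθ θ₂)
  have hint_cross : ∀ θ₁ ∈ Set.Ioc (0 : ℝ) 1, ∀ θ₂ ∈ Set.Ioc (0 : ℝ) 1,
      Integrable (fun x => pθ θ₁ x * Real.log (pθ θ₂ x)) μ := by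
    intro θ₁ h₁ θ₂ h₂
    exact (((hint_plog θ₁ h₁).const_mul (θ₂ / Z θ₁)).sub
      ((hint_pow θ₁ h₁).const_mul (Real.log (Z θ₂) / Z θ₁))).congr
      (hae θ₁ h₁ θ₂ h₂).symm
  -- value of cross entropy integral
  have hval : ∀ θ₁ ∈ Set.Ioc (0 : ℝ) 1, ∀ θ₂ ∈ Set.Ioc (0 : ℝ) 1,
      ∫ x, pθ θ₁ x * Real.log (pθ θ₂ x) ∂μ
        = θ₂ * ((∫ x, p x ^ θ₁ * Real.log (p x) ∂μ) / Z θ₁) - Real.log (Z θ₂) := by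
    intro θ₁ h₁ θ₂ h₂
    rw [integral_congr_ae (hae θ₁ h₁ θ₂ h₂)]
    rw [integral_sub ((hint_plog θ₁ h₁).const_mul _) ((hint_pow θ₁ h₁).const_mul _),
      integral_const_mul, integral_const_mul]
    have hZv : ∫ x, p x ^ θ₁ ∂μ = Z θ₁ := by rw [hZ]
    rw [hZv]
    field_simp [(hZpos θ₁ h₁).ne']
  -- Gibbs inequality
  have gibbs : ∀ θ₁ ∈ Set.Ioc (0 : ℝ) 1, ∀ θ₂ ∈ Set.Ioc (0 : ℝ) 1,
      ∫ x, pθ θ₁ x * Real.log (pθ θ₂ x) ∂μ ≤ ∫ x, pθ θ₁ x * Real.log (pθ θ₁ x) ∂μ := by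
    intro θ₁ h₁ θ₂ h₂
    have hptwise : ∀ᵐ x ∂μ, pθ θ₁ x * Real.log (pθ θ₂ x)
        ≤ pθ θ₁ x * Real.log (pθ θ₁ x) + (pθ θ₂ x - pθ θ₁ x) := by
      filter_upwards [hppos] with x hx
      have hq : 0 < pθ θ₁ x := by rw [hpθ]; exact div_pos (Real.rpow_pos_of_pos hx θ₁) (hZpos θ₁ h₁)
      have hr : 0 < pθ θ₂ x := by rw [hpθ]; exact div_pos (Real.rpow_pos_of_pos hx θ₂) (hZpos θ₂ h₂)
      have h1 : Real.log (pθ θ₂ x / pθ θ₁ x) ≤ pθ θ₂ x / pθ θ₁ x - 1 :=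
        Real.log_le_sub_one_of_pos (by positivity)
      rw [Real.log_div hr.ne' hq.ne'] at h1
      have h3 := mul_le_mul_of_nonneg_left h1 hq.le
      have h4 : pθ θ₁ x * (pθ θ₂ x / pθ θ₁ x - 1) = pθ θ₂ x - pθ θ₁ x := by
        field_simp
      nlinarith [h3, h4]
    have hsub : Integrable (fun x => pθ θ₂ x - pθ θ₁ x) μ :=
      (hint_pθ θ₂ h₂).sub (hint_pθ θ₁ h₁)
    have hrhs : Integrable (fun x => pθ θ₁ x * Real.log (pθ θ₁ x) + (pθ θ₂ x - pθ θ₁ x)) μ :=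
      (hint_cross θ₁ h₁ θ₁ h₁).add hsub
    have := integral_mono_ae (hint_cross θ₁ h₁ θ₂ h₂) hrhs hptwise
    rw [integral_add (hint_cross θ₁ h₁ θ₁ h₁) hsub,
      integral_sub (hint_pθ θ₂ h₂) (hint_pθ θ₁ h₁), hpθ1 θ₂ h₂, hpθ1 θ₁ h₁] at this
    linarith
  -- entropy formula
  have hHval : ∀ θ ∈ Set.Ioc (0 : ℝ) 1,
      H (pθ θ) = -(θ * ((∫ x, p x ^ θ * Real.log (p x) ∂μ) / Z θ) - Real.log (Z θ)) := by
    intro θ hθ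
    rw [hH]
    simp only
    rw [hval θ hθ θ hθ]
  -- antitone
  have hanti : AntitoneOn (fun θ => H (pθ θ)) (Set.Ioc (0 : ℝ) 1) := by
    intro θ₁ h₁ θ₂ h₂ h12
    rcases eq_or_lt_of_le h12 with heq | hlt
    · rw [heq]
    simp only
    set E₁ := (∫ x, p x ^ θ₁ * Real.log (p x) ∂μ) / Z θ₁ with hE₁
    set E₂ := (∫ x, p x ^ θ₂ * Real.log (p x) ∂μ) / Z θ₂ with hE₂
    have g12 := gibbs θ₁ h₁ θ₂ h₂
    have g21 := gibbs θ₂ h₂ θ₁ h₁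
    rw [hval θ₁ h₁ θ₂ h₂, hval θ₁ h₁ θ₁ h₁] at g12
    rw [hval θ₂ h₂ θ₁ h₁, hval θ₂ h₂ θ₂ h₂] at g21
    rw [hHval θ₁ h₁, hHval θ₂ h₂]
    -- g12 : θ₂ * E₁ - log Z₂ ≤ θ₁ * E₁ - log Z₁
    -- g21 : θ₁ * E₂ - log Z₁ ≤ θ₂ * E₂ - log Z₂
    have hd : 0 ≤ E₂ - E₁ := by
      by_contra hc
      push_neg at hc
      nlinarith [g12, g21, hlt]
    nlinarith [mul_nonneg h₁.1.le hd, g21]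
  refine ⟨fun θ hθ => ⟨hint_pow θ hθ, hZpos θ hθ⟩, fun θ hθ => hint_cross θ hθ θ hθ, hanti, ?_⟩
  intro θ hθ
  have hZ1 : Z 1 = 1 := by
    rw [hZ]
    simp only [Real.rpow_one]
    exact hp1
  have hpθeq : pθ 1 = p := by
    funext x
    rw [hpθ]
    simp [hZ1, Real.rpow_one]
  have h1mem : (1 : ℝ) ∈ Set.Ioc (0 : ℝ) 1 := ⟨one_pos, le_refl 1⟩
  simpa [hpθeq] using hanti hθ h1mem hθ.2
end

section
/- Let p be a probability density on S that is positive μ-almost everywhere. For θ ∈ (0,1), the normalizer Z_θ = ∫ p(x)^θ dμ(x) is finite and positive; define the tempered density p_θ(x) = p(x)^θ / Z_θ, and write Var_{p_θ}[log p] = ∫ p_θ (log p)² dμ − (∫ p_θ log p dμ)², which is finite for every θ ∈ (0,1). Then the function θ ↦ H(p_θ) is differentiable on (0,1) and its derivative at θ equals −θ · Var_{p_θ}[log p]. -/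
/-!
With `X = log p` one has `p^θ = exp (θ X)` almost everywhere, so `Z` is the moment generating
function of `X` and `H(p_θ) = K(θ) - θ K'(θ)` for the cumulant generating function `K = log Z`.
Differentiating gives `-θ K''(θ)`, and `K''(θ)` is the variance of `X` under `p_θ`. Since
`exp (0 * X) = 1` and `exp (1 * X) = p` are integrable, so is `exp (θ X)` for `θ ∈ [0, 1]`; on the
interior `(0, 1)` of that interval `K` is analytic and its derivatives are moments of the tilted
density.
-/

open MeasureTheory Real Filter ProbabilityTheory

namespace ProbabilityTheory

variable {Ω : Type*} [MeasurableSpace Ω] {X : Ω → ℝ} {μ : Measure Ω} {v : ℝ}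

lemma integral_exp_mul_div_mgf_mul_log (hμ : μ ≠ 0) (hv : v ∈ interior (integrableExpSet X μ)) :
    ∫ ω, exp (v * X ω) / mgf X μ v * log (exp (v * X ω) / mgf X μ v) ∂μ
      = v * deriv (cgf X μ) v - cgf X μ v := by
  have hexp : Integrable (fun ω ↦ exp (v * X ω)) μ := interior_subset (s := integrableExpSet X μ) hv
  have hmgf : mgf X μ v ≠ 0 := (mgf_pos' hμ hexp).ne'
  have hXexp : Integrable (fun ω ↦ X ω * exp (v * X ω)) μ := by
    simpa using integrable_pow_mul_exp_of_mem_interior_integrableExpSet hv 1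
  have hlog : ∀ ω, log (exp (v * X ω) / mgf X μ v) = v * X ω - cgf X μ v := fun ω ↦ by
    rw [log_div (exp_pos _).ne' hmgf, log_exp, cgf]
  calc ∫ ω, exp (v * X ω) / mgf X μ v * log (exp (v * X ω) / mgf X μ v) ∂μ
      = ∫ ω, (v / mgf X μ v) * (X ω * exp (v * X ω))
          - (cgf X μ v / mgf X μ v) * exp (v * X ω) ∂μ := by
        congr 1 with ω
        rw [hlog]
        ring
    _ = v * (μ[fun ω ↦ X ω * exp (v * X ω)] / mgf X μ v) - cgf X μ v := by
        rw [integral_sub (hXexp.const_mul _) (hexp.const_mul _), integral_const_mul,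
          integral_const_mul, ← mgf]
        field_simp
    _ = v * deriv (cgf X μ) v - cgf X μ v := by rw [deriv_cgf hv]

lemma hasDerivAt_cgf_sub_mul_deriv_cgf (hv : v ∈ interior (integrableExpSet X μ)) :
    HasDerivAt (fun t ↦ cgf X μ t - t * deriv (cgf X μ) t)
      (-v * iteratedDeriv 2 (cgf X μ) v) v := by
  have hcgf : HasDerivAt (cgf X μ) (deriv (cgf X μ) v) v :=
    (analyticAt_cgf hv).differentiableAt.hasDerivAt
  have hderiv : HasDerivAt (deriv (cgf X μ)) (iteratedDeriv 2 (cgf X μ) v) v := by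
    rw [iteratedDeriv_succ, iteratedDeriv_one]
    exact (analyticAt_cgf hv).deriv.differentiableAt.hasDerivAt
  exact (hcgf.fun_sub ((hasDerivAt_id' v).fun_mul hderiv)).congr_deriv (by ring)

end ProbabilityTheory

section PositiveDensity

variable {S : Type*} [MeasurableSpace S] {μ : Measure S} {p : S → ℝ}

lemma rpow_ae_eq_exp_mul_log (hp : ∀ᵐ x ∂μ, 0 < p x) (t : ℝ) :
    (fun x ↦ p x ^ t) =ᵐ[μ] fun x ↦ exp (t * log (p x)) := by
  filter_upwards [hp] with x hx
  rw [rpow_def_of_pos hx, mul_comm]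

lemma integral_rpow_eq_mgf_log (hp : ∀ᵐ x ∂μ, 0 < p x) (t : ℝ) :
    ∫ x, p x ^ t ∂μ = mgf (fun x ↦ log (p x)) μ t :=
  integral_congr_ae (rpow_ae_eq_exp_mul_log hp t)

lemma rpow_div_integral_ae_eq_exp_mul_div_mgf (hp : ∀ᵐ x ∂μ, 0 < p x) (t : ℝ) :
    (fun x ↦ p x ^ t / ∫ y, p y ^ t ∂μ)
      =ᵐ[μ] fun x ↦ exp (t * log (p x)) / mgf (fun x ↦ log (p x)) μ t := by
  filter_upwards [rpow_ae_eq_exp_mul_log hp t] with x hx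
  rw [hx, integral_rpow_eq_mgf_log hp]

lemma integral_rpow_div_integral_mul (hp : ∀ᵐ x ∂μ, 0 < p x) (t : ℝ) (g : S → ℝ) :
    ∫ x, p x ^ t / (∫ y, p y ^ t ∂μ) * g x ∂μ
      = (∫ x, g x * exp (t * log (p x)) ∂μ) / mgf (fun x ↦ log (p x)) μ t := by
  rw [← integral_div]
  refine integral_congr_ae ?_
  filter_upwards [rpow_div_integral_ae_eq_exp_mul_div_mgf hp t] with x hx
  rw [hx]
  ring

lemma integral_rpow_div_integral_mul_log (hμ : μ ≠ 0) (hp : ∀ᵐ x ∂μ, 0 < p x) {t : ℝ}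
    (ht : t ∈ interior (integrableExpSet (fun x ↦ log (p x)) μ)) :
    ∫ x, p x ^ t / (∫ y, p y ^ t ∂μ) * log (p x ^ t / ∫ y, p y ^ t ∂μ) ∂μ
      = t * deriv (cgf (fun x ↦ log (p x)) μ) t - cgf (fun x ↦ log (p x)) μ t := by
  rw [← integral_exp_mul_div_mgf_mul_log hμ ht]
  refine integral_congr_ae ?_
  filter_upwards [rpow_div_integral_ae_eq_exp_mul_div_mgf hp t] with x hx
  rw [hx]

lemma Ioo_subset_interior_integrableExpSet_log [IsFiniteMeasure μ] (hint : Integrable p μ)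
    (hp : ∀ᵐ x ∂μ, 0 < p x) :
    Set.Ioo 0 1 ⊆ interior (integrableExpSet (fun x ↦ log (p x)) μ) := by
  have h0 : (0 : ℝ) ∈ integrableExpSet (fun x ↦ log (p x)) μ := by
    simp [integrableExpSet]
  have h1 : (1 : ℝ) ∈ integrableExpSet (fun x ↦ log (p x)) μ :=
    hint.congr <| by filter_upwards [hp] with x hx using by simp [exp_log hx]
  calc Set.Ioo (0 : ℝ) 1 = interior (Set.Icc 0 1) := interior_Icc.symm
    _ ⊆ _ := interior_mono <| by
      simpa [segment_eq_Icc] using convex_integrableExpSet.segment_subset h0 h1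

end PositiveDensity

theorem tempered_entropy_deriv_general
    {S : Type*} [MeasurableSpace S] (μ : Measure S)
    (hμ0 : 0 < μ Set.univ) (hμfin : μ Set.univ < ⊤)
    (p : S → ℝ) (hp1 : ∫ x, p x ∂μ = 1)
    (hppos : ∀ᵐ x ∂μ, 0 < p x)
    (Z : ℝ → ℝ) (hZ : Z = fun θ => ∫ x, p x ^ θ ∂μ)
    (pθ : ℝ → S → ℝ) (hpθ : pθ = fun θ x => p x ^ θ / Z θ)
    (H : (S → ℝ) → ℝ)
    (hH : H = fun r => -∫ x, r x * Real.log (r x) ∂μ) :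
    ∀ θ ∈ Set.Ioo (0 : ℝ) 1,
      Integrable (fun x => p x ^ θ) μ ∧ 0 < Z θ ∧
      Integrable (fun x => pθ θ x * Real.log (p x) ^ 2) μ ∧
      HasDerivAt (fun t => H (pθ t))
        (-θ * ((∫ x, pθ θ x * Real.log (p x) ^ 2 ∂μ) -
          (∫ x, pθ θ x * Real.log (p x) ∂μ) ^ 2)) θ := by
  intro θ hθ
  subst hZ hpθ hH
  beta_reduce
  have : IsFiniteMeasure μ := ⟨hμfin⟩
  have hμ : μ ≠ 0 := Measure.measure_univ_pos.mp hμ0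
  have hX := Ioo_subset_interior_integrableExpSet_log (.of_integral_ne_zero (by simp [hp1])) hppos
  have hexp : Integrable (fun x ↦ exp (θ * log (p x))) μ :=
    interior_subset (s := integrableExpSet _ μ) (hX hθ)
  refine ⟨hexp.congr (rpow_ae_eq_exp_mul_log hppos θ).symm,
    integral_rpow_eq_mgf_log hppos θ ▸ mgf_pos' hμ hexp, ?_, ?_⟩
  · refine ((integrable_pow_mul_exp_of_mem_interior_integrableExpSet (hX hθ) 2).div_const
      (mgf (fun x ↦ log (p x)) μ θ)).congr ?_
    filter_upwards [rpow_div_integral_ae_eq_exp_mul_div_mgf hppos θ] with x hx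
    rw [hx]
    ring
  · rw [integral_rpow_div_integral_mul hppos, integral_rpow_div_integral_mul hppos,
      ← deriv_cgf (hX hθ), ← iteratedDeriv_two_cgf (hX hθ)]
    refine (hasDerivAt_cgf_sub_mul_deriv_cgf (hX hθ)).congr_of_eventuallyEq ?_
    filter_upwards [isOpen_Ioo.mem_nhds hθ] with t ht
    rw [integral_rpow_div_integral_mul_log hμ hppos (hX ht), neg_sub]

/-- For a positive density `p` on a finite measure space, the tempered densities
`p_θ = p^θ / Z_θ` are well defined for `θ ∈ (0,1)`, the variance `Var_{p_θ}[log p]` is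
finite, and the entropy `θ ↦ H(p_θ)` is differentiable on `(0,1)` with derivative
`−θ·Var_{p_θ}[log p]`. -/
theorem tempered_entropy_deriv
    {S : Type*} [MeasurableSpace S] (μ : Measure S)
    (hμ0 : 0 < μ Set.univ) (hμfin : μ Set.univ < ⊤)
    (p : S → ℝ) (hpmeas : Measurable p) (hp0 : ∀ x, 0 ≤ p x) (hp1 : ∫ x, p x ∂μ = 1)
    (hppos : ∀ᵐ x ∂μ, 0 < p x)
    (Z : ℝ → ℝ) (hZ : Z = fun θ => ∫ x, p x ^ θ ∂μ)
    (pθ : ℝ → S → ℝ) (hpθ : pθ = fun θ x => p x ^ θ / Z θ)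
    (H : (S → ℝ) → ℝ)
    (hH : H = fun r => -∫ x, r x * Real.log (r x) ∂μ) :
    ∀ θ ∈ Set.Ioo (0 : ℝ) 1,
      Integrable (fun x => p x ^ θ) μ ∧ 0 < Z θ ∧
      Integrable (fun x => pθ θ x * Real.log (p x) ^ 2) μ ∧
      HasDerivAt (fun t => H (pθ t))
        (-θ * ((∫ x, pθ θ x * Real.log (p x) ^ 2 ∂μ) -
          (∫ x, pθ θ x * Real.log (p x) ∂μ) ^ 2)) θ :=
  tempered_entropy_deriv_general μ hμ0 hμfin p hp1 hppos Z hZ pθ hpθ H hH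
end
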